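/- Let (X,ρ) be a compact pseudo-metric space with diameter Ω, d ∈ ℕ, and ρ₂ the normalized ℓ² pseudo-metric on X^d. Suppose Ω' ⊆ X is (ρ,√ε)-spanning for X. Let E ⊆ X^d be (ρ₂,ε)-spanning for a set Y ⊆ X^d, and let E' = { y^χ : y ∈ E, Λ ⊆ [d], |Λ| = ⌈εd⌉, χ : Λ → Ω' } where y^χ agrees with y off Λ and equals χ on Λ. Then E' is (ρ_∞, √ε)-spanning for Y. -/

import Mathlib

/-!
If `ρ₂(y, z) ≤ ε`, Markov's inequality applied to the squares `ρ(yᵢ, zᵢ)²` shows that at most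
`εd` coordinates have `ρ(yᵢ, zᵢ) > √ε`. Enlarging this set of bad coordinates to a set `Λ` of
size exactly `⌈εd⌉` and replacing `y` on `Λ` by `√ε`-close points of `Ω'` gives a point of `E'`
that is `√ε`-close to `z` in every coordinate.
-/

open Finset

theorem Finset.card_filter_lt_mul_le_sum {ι R : Type*} [CommSemiring R] [PartialOrder R]
    [IsOrderedRing R] (s : Finset ι) (f : ι → R) (t : R) (hf : ∀ i ∈ s, 0 ≤ f i)
    [DecidablePred (t < f ·)] :
    #(s.filter (t < f ·)) * t ≤ ∑ i ∈ s, f i :=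
  calc (#(s.filter (t < f ·)) : R) * t = #(s.filter (t < f ·)) • t := (nsmul_eq_mul _ _).symm
    _ ≤ ∑ i ∈ s.filter (t < f ·), f i :=
      card_nsmul_le_sum _ _ _ fun _ hi => (mem_filter.mp hi).2.le
    _ ≤ ∑ i ∈ s, f i :=
      sum_le_sum_of_subset_of_nonneg (filter_subset _ _) fun i hi _ => hf i hi

theorem card_filter_sqrt_lt_le_of_sqrt_mean_sq_le {ι : Type*} [Fintype ι] [Nonempty ι]
    (f : ι → ℝ) {ε : ℝ} (hε : 0 < ε)
    (hf : Real.sqrt ((1 / (Fintype.card ι : ℝ)) * ∑ i, f i ^ 2) ≤ ε) :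
    (#{i | Real.sqrt ε < f i} : ℝ) ≤ ε * Fintype.card ι := by
  have hcard : (0 : ℝ) < Fintype.card ι := by exact_mod_cast Fintype.card_pos
  have hsum : ∑ i, f i ^ 2 ≤ ε ^ 2 * Fintype.card ι := by
    rw [Real.sqrt_le_left hε.le, one_div, inv_mul_le_iff₀ hcard] at hf
    linarith
  have hbad : ({i | Real.sqrt ε < f i} : Finset ι) ⊆ ({i | ε < f i ^ 2} : Finset ι) :=
    monotone_filter_right _ fun _ _ => Real.lt_sq_of_sqrt_lt
  have hmarkov := card_filter_lt_mul_le_sum univ (f · ^ 2) ε fun i _ => sq_nonneg (f i)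
  have hcount : (#{i | Real.sqrt ε < f i} : ℝ) * ε ≤ ε * Fintype.card ι * ε := by
    calc (#{i | Real.sqrt ε < f i} : ℝ) * ε ≤ #{i | ε < f i ^ 2} * ε :=
          mul_le_mul_of_nonneg_right (by exact_mod_cast card_le_card hbad) hε.le
      _ ≤ ε ^ 2 * Fintype.card ι := hmarkov.trans hsum
      _ = ε * Fintype.card ι * ε := by ring
  exact le_of_mul_le_mul_right hcount hε

theorem stmt18_general {S : Type*} (ρ : S → S → ℝ)
    (hsymm : ∀ x y, ρ x y = ρ y x)
    (d : ℕ) (hd : 0 < d) (ε : ℝ) (hε0 : 0 < ε) (hε1 : ε ≤ 1)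
    (Ω' : Set S) (hΩ' : ∀ x : S, ∃ w ∈ Ω', ρ x w ≤ Real.sqrt ε)
    (Y E : Set (Fin d → S))
    (hE : ∀ z ∈ Y, ∃ y ∈ E,
      Real.sqrt ((1 / (d : ℝ)) * ∑ i, ρ (y i) (z i) ^ 2) ≤ ε) :
    ∀ z ∈ Y, ∃ y' ∈ {y' : Fin d → S | ∃ y ∈ E, ∃ Λ : Finset (Fin d),
        Λ.card = ⌈ε * (d : ℝ)⌉₊ ∧ (∀ i ∉ Λ, y' i = y i) ∧ ∀ i ∈ Λ, y' i ∈ Ω'},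
      ∀ i, ρ (y' i) (z i) ≤ Real.sqrt ε := by
  intro z hz
  obtain ⟨y, hyE, hy⟩ := hE z hz
  choose χ hχΩ' hχ using hΩ'
  have : Nonempty (Fin d) := Fin.pos_iff_nonempty.mp hd
  set B : Finset (Fin d) := {i | Real.sqrt ε < ρ (y i) (z i)}
  have hB : #B ≤ ⌈ε * d⌉₊ := by
    have := card_filter_sqrt_lt_le_of_sqrt_mean_sq_le (fun i => ρ (y i) (z i)) hε0
      (by simpa using hy)
    exact Nat.cast_le.mp ((by simpa using this : (#B : ℝ) ≤ ε * d).trans (Nat.le_ceil _))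
  have hceil : ⌈ε * d⌉₊ ≤ #(univ : Finset (Fin d)) := by
    simpa using Nat.ceil_le.mpr (mul_le_of_le_one_left d.cast_nonneg hε1)
  obtain ⟨Λ, hBΛ, -, hΛ⟩ := exists_subsuperset_card_eq (subset_univ B) hB hceil
  refine ⟨Λ.piecewise (χ ∘ z) y, ⟨y, hyE, Λ, hΛ, fun i hi => piecewise_eq_of_notMem _ _ _ hi,
    fun i hi => by simpa [piecewise_eq_of_mem _ _ _ hi] using hχΩ' (z i)⟩, fun i => ?_⟩
  by_cases hi : i ∈ Λ
  · simpa [piecewise_eq_of_mem _ _ _ hi, hsymm] using hχ (z i)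
  · have hiB : i ∉ B := fun h => hi (hBΛ h)
    simpa [piecewise_eq_of_notMem _ _ _ hi, B] using hiB

/-- If `Ω'` is `(ρ,√ε)`-spanning for `X` and `E` is `(ρ₂,ε)`-spanning for `Y ⊆ X^d`, then
the set `E'` of all modifications of points of `E` on `⌈εd⌉` coordinates by values of `Ω'`
is `(ρ_∞,√ε)`-spanning for `Y`. -/
theorem stmt18 {S : Type*} (ρ : S → S → ℝ)
    (hnonneg : ∀ x y, 0 ≤ ρ x y) (hrefl : ∀ x, ρ x x = 0)
    (hsymm : ∀ x y, ρ x y = ρ y x)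
    (htri : ∀ x y z, ρ x z ≤ ρ x y + ρ y z)
    (Ω : ℝ) (hdiam : ∀ x y, ρ x y ≤ Ω)
    (d : ℕ) (hd : 0 < d) (ε : ℝ) (hε0 : 0 < ε) (hε1 : ε ≤ 1)
    (Ω' : Set S) (hΩ' : ∀ x : S, ∃ w ∈ Ω', ρ x w ≤ Real.sqrt ε)
    (Y E : Set (Fin d → S))
    (hE : ∀ z ∈ Y, ∃ y ∈ E,
      Real.sqrt ((1 / (d : ℝ)) * ∑ i, ρ (y i) (z i) ^ 2) ≤ ε) :
    ∀ z ∈ Y, ∃ y' ∈ {y' : Fin d → S | ∃ y ∈ E, ∃ Λ : Finset (Fin d),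
        Λ.card = ⌈ε * (d : ℝ)⌉₊ ∧ (∀ i ∉ Λ, y' i = y i) ∧ ∀ i ∈ Λ, y' i ∈ Ω'},
      ∀ i, ρ (y' i) (z i) ≤ Real.sqrt ε :=
  stmt18_general ρ hsymm d hd ε hε0 hε1 Ω' hΩ' Y E hE
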